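/- Let γ = (X, Y, Z) be a triangular polynomial automorphism of K[x,y,z] (so X ∈ K*x + K[y,z], Y ∈ K*y + K[z], Z ∈ K*z + K) with ldeg₂(X) = (0, b, c) where b ≥ 1 and c ≥ 0 (ldeg₂ being the leading exponent in the lex order with y > z > x), deg_{(3,3,1)}(X) = 3b + c and deg_{(3,3,1)}(Y) = 3. Then for every P ∈ P_{m,n}^* (m ≥ 1, n ≥ 0), the polynomial (P)πγ lies in Q_{m',n'}^* with m' = 4bm and n' = 4cm + n; that is, its support lies in {(i,j,k) : i+j ≤ m', 3i+3j+k ≤ 3m'+n'} and its ldeg₂ equals (0, m', n'). -/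

import Mathlib

/-!
Write `(P)πγ = ∑_d p_d Y^{d₀} X^{d₁} Z^{d₂}`. Weighted total degrees are subadditive, so the
`(1,1,0)`- and `(3,3,1)`-degrees of `(P)πγ` are bounded by the weighted degrees of `P` for the
weights `(1, b, 0)` and `(3, 3b + c, 1)`, and the inequalities defining `P_{m,n}` bound these by
`4bm` and `3·4bm + 4cm + n`.

For `ldeg₂` we use the lexicographic monomial order with `y > z > x`. There `ldeg₂ Y ≤ y`,
`ldeg₂ X = y^b z^c` and `ldeg₂ Z = z`, so the summand of `d` has leading exponent at most
`(0, d₀ + b d₁, c d₁ + d₂)`. Because `b ≥ 1` and `4d₀ + d₁ ≤ 4m`, this is strictly below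
`(0, 4bm, 4cm + n)` for every `d ≠ (0, 4m, n)`, whereas the summand of `d = (0, 4m, n)` has
exactly this leading exponent.
-/

open MvPolynomial

/-- Lexicographic key: `toLex (p, toLex (q, r))`. -/
def lkey (p q r : ℕ) : ℕ ×ₗ (ℕ ×ₗ ℕ) := toLex (p, toLex (q, r))

variable {K : Type*} [Field K]

/-- The `w`-weighted degree of a polynomial in `K[x,y,z]`. -/
noncomputable def degW (w1 w2 w3 : ℕ) (P : MvPolynomial (Fin 3) K) : ℕ :=
  P.support.sup (fun d => w1 * d 0 + w2 * d 1 + w3 * d 2)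

/-- `ldeg₂ P = (i,j,k)`: leading exponent in the lex order with `y > z > x`. -/
def HasLdeg2 (P : MvPolynomial (Fin 3) K) (i j k : ℕ) : Prop :=
  (∃ d ∈ P.support, d 0 = i ∧ d 1 = j ∧ d 2 = k) ∧
  ∀ d ∈ P.support, lkey (d 1) (d 2) (d 0) ≤ lkey j k i

/-- `ldeg₃ P = (i,j,k)`: leading exponent in the lex order with `z > x > y`. -/
def HasLdeg3 (P : MvPolynomial (Fin 3) K) (i j k : ℕ) : Prop :=
  (∃ d ∈ P.support, d 0 = i ∧ d 1 = j ∧ d 2 = k) ∧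
  ∀ d ∈ P.support, lkey (d 2) (d 0) (d 1) ≤ lkey k i j

open scoped MonomialOrder

namespace MvPolynomial

section WeightedTotalDegree

variable {σ τ R M : Type*} [CommSemiring R] [AddCommMonoid M] [SemilatticeSup M] [OrderBot M]

theorem weightedTotalDegree_C_le (w : σ → M) (r : R) : weightedTotalDegree w (C r) ≤ 0 :=
  Finset.sup_le fun d hd => by
    rw [Finset.mem_singleton.mp (support_monomial_subset hd), map_zero]

variable [IsOrderedAddMonoid M]

theorem weightedTotalDegree_mul_le (w : σ → M) (p q : MvPolynomial σ R) :
    weightedTotalDegree w (p * q) ≤ weightedTotalDegree w p + weightedTotalDegree w q := by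
  classical
  refine Finset.sup_le fun d hd => ?_
  obtain ⟨a, ha, b, hb, rfl⟩ := Finset.mem_add.mp (support_mul p q hd)
  rw [map_add]
  exact add_le_add (le_weightedTotalDegree w ha) (le_weightedTotalDegree w hb)

theorem weightedTotalDegree_pow_le (w : σ → M) (p : MvPolynomial σ R) (n : ℕ) :
    weightedTotalDegree w (p ^ n) ≤ n • weightedTotalDegree w p := by
  induction n with
  | zero => simpa using weightedTotalDegree_C_le w (1 : R)
  | succ n ih =>
    rw [pow_succ, succ_nsmul]
    exact (weightedTotalDegree_mul_le w _ _).trans (add_le_add_left ih _)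

theorem weightedTotalDegree_prod_le {ι : Type*} (w : σ → M) (s : Finset ι)
    (f : ι → MvPolynomial σ R) :
    weightedTotalDegree w (∏ i ∈ s, f i) ≤ ∑ i ∈ s, weightedTotalDegree w (f i) := by
  classical
  induction s using Finset.induction_on with
  | empty => simpa using weightedTotalDegree_C_le w (1 : R)
  | insert i s hi ih =>
    rw [Finset.prod_insert hi, Finset.sum_insert hi]
    exact (weightedTotalDegree_mul_le w _ _).trans (add_le_add_right ih _)

theorem weightedTotalDegree_aeval_le [Fintype σ] (w : τ → M) {f : σ → MvPolynomial τ R}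
    {v : σ → M} (hv : ∀ i, weightedTotalDegree w (f i) ≤ v i) (P : MvPolynomial σ R) :
    weightedTotalDegree w (aeval f P) ≤ weightedTotalDegree v P := by
  classical
  rw [aeval_def, eval₂_eq']
  refine Finset.sup_le fun e he => ?_
  obtain ⟨d, hd, he⟩ := Finset.mem_biUnion.mp (support_sum he)
  calc Finsupp.weight w e
      ≤ weightedTotalDegree w (algebraMap R _ (coeff d P) * ∏ i, f i ^ d i) :=
        le_weightedTotalDegree w he
    _ ≤ 0 + ∑ i, d i • v i := by
        refine (weightedTotalDegree_mul_le w _ _).trans (add_le_add ?_ ?_)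
        · exact weightedTotalDegree_C_le w _
        · refine (weightedTotalDegree_prod_le w _ _).trans (Finset.sum_le_sum fun i _ => ?_)
          exact (weightedTotalDegree_pow_le w _ _).trans (nsmul_le_nsmul_right (hv i) _)
    _ ≤ weightedTotalDegree v P := by
        rw [zero_add, ← Finsupp.weight_eq_sum]
        exact le_weightedTotalDegree v hd

end WeightedTotalDegree

theorem weightedTotalDegree_C_mul_X_add_C_le {σ R : Type*} [CommSemiring R]
    (w : σ → ℕ) (a r : R) (i : σ) : weightedTotalDegree w (C a * X i + C r) ≤ w i := by
  classical
  refine Finset.sup_le fun d hd => ?_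
  rcases Finset.mem_union.mp (support_add hd) with h | h
  · rw [C_mul_X_eq_monomial] at h
    rw [Finset.mem_singleton.mp (support_monomial_subset h), Finsupp.weight_single, one_smul]
  · rw [Finset.mem_singleton.mp (support_monomial_subset h), map_zero]
    exact Nat.zero_le _

end MvPolynomial

namespace MonomialOrder

variable {σ τ R : Type*} (m : MonomialOrder τ)

theorem degree_C_mul_X_add_C [CommSemiring R] {a : R} (ha : a ≠ 0) (r : R) (i : τ) :
    m.degree (C a * X i + C r) = Finsupp.single i 1 := by
  classical
  have hdeg : m.degree (C a * X i) = Finsupp.single i 1 := by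
    rw [C_mul_X_eq_monomial, m.degree_monomial, if_neg ha]
  rw [m.degree_add_of_lt, hdeg]
  rw [m.degree_C, hdeg, map_zero, m.toSyn_lt_iff_ne_zero, Ne, m.toSyn_eq_zero_iff]
  exact Finsupp.single_ne_zero.mpr one_ne_zero

theorem degree_sum_eq_of_forall_lt [CommSemiring R] {ι : Type*} {s : Finset ι} {i : ι}
    (hi : i ∈ s) {f : ι → MvPolynomial τ R}
    (h : ∀ j ∈ s, j ≠ i → m.degree (f j) ≺[m] m.degree (f i)) :
    m.degree (∑ j ∈ s, f j) = m.degree (f i) ∧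
      m.leadingCoeff (∑ j ∈ s, f j) = m.leadingCoeff (f i) := by
  classical
  rw [← Finset.add_sum_erase s f hi]
  rcases (s.erase i).eq_empty_or_nonempty with hs | ⟨j, hj⟩
  · simp [hs]
  have hrest : m.degree (∑ j ∈ s.erase i, f j) ≺[m] m.degree (f i) := by
    have hbot : ⊥ < m.toSyn (m.degree (f i)) :=
      bot_le.trans_lt (h j (Finset.mem_of_mem_erase hj) (Finset.ne_of_mem_erase hj))
    refine m.degree_sum_le.trans_lt ((Finset.sup_lt_iff hbot).mpr fun k hk => ?_)
    exact h k (Finset.mem_of_mem_erase hk) (Finset.ne_of_mem_erase hk)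
  exact ⟨m.degree_add_of_lt hrest, m.leadingCoeff_add_of_lt hrest⟩

theorem degree_aeval_eq_of_forall_lt [Fintype σ] [CommRing R] [IsDomain R]
    {f : σ → MvPolynomial τ R} {D : σ → τ →₀ ℕ} (hD : ∀ i, m.degree (f i) ≼[m] D i)
    {P : MvPolynomial σ R} {d₀ : σ →₀ ℕ} (hd₀ : d₀ ∈ P.support)
    (hf : ∀ i, d₀ i ≠ 0 → f i ≠ 0)
    (hlt : ∀ d ∈ P.support, d ≠ d₀ → ∑ i, d i • D i ≺[m] ∑ i, d₀ i • m.degree (f i)) :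
    aeval f P ≠ 0 ∧ m.degree (aeval f P) = ∑ i, d₀ i • m.degree (f i) := by
  classical
  set T : (σ →₀ ℕ) → MvPolynomial τ R := fun d => C (coeff d P) * ∏ i, f i ^ d i with hT
  have haeval : aeval f P = ∑ d ∈ P.support, T d := by
    rw [aeval_def, eval₂_eq']; rfl
  have hpow (i : σ) : f i ^ d₀ i ≠ 0 := by
    by_cases h : d₀ i = 0
    · simp [h]
    · exact pow_ne_zero _ (hf i h)
  have hC : (C (coeff d₀ P) : MvPolynomial τ R) ≠ 0 := C_ne_zero.mpr (mem_support_iff.mp hd₀)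
  have hprod : ∏ i, f i ^ d₀ i ≠ 0 := Finset.prod_ne_zero_iff.mpr fun i _ => hpow i
  have hdegT₀ : m.degree (T d₀) = ∑ i, d₀ i • m.degree (f i) := by
    rw [hT, m.degree_mul hC hprod, m.degree_C, zero_add, m.degree_prod fun i _ => hpow i]
    simp only [m.degree_pow]
  have hdegT (d : σ →₀ ℕ) : m.degree (T d) ≼[m] ∑ i, d i • D i := by
    refine m.degree_mul_le.trans ?_
    rw [m.degree_C, zero_add]
    refine m.degree_prod_le.trans ?_
    simp only [map_sum, map_nsmul]
    exact Finset.sum_le_sum fun i _ =>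
      (m.degree_pow_le _).trans (by rw [map_nsmul]; exact nsmul_le_nsmul_right (hD i) _)
  obtain ⟨hdeg, hlc⟩ := m.degree_sum_eq_of_forall_lt hd₀ fun d hd hne =>
    ((hdegT d).trans_lt (hlt d hd hne)).trans_eq (congrArg m.toSyn hdegT₀.symm)
  refine ⟨fun h => ?_, by rw [haeval, hdeg, hdegT₀]⟩
  have hT₀ : m.leadingCoeff (T d₀) ≠ 0 := m.leadingCoeff_ne_zero_iff.mpr (mul_ne_zero hC hprod)
  rw [← hlc, ← haeval, h, m.leadingCoeff_zero] at hT₀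
  exact hT₀ rfl

end MonomialOrder

noncomputable def exponent3 (i j k : ℕ) : Fin 3 →₀ ℕ := Finsupp.equivFunOnFinite.symm ![i, j, k]

@[simp] theorem exponent3_apply_zero (i j k : ℕ) : exponent3 i j k 0 = i := rfl
@[simp] theorem exponent3_apply_one (i j k : ℕ) : exponent3 i j k 1 = j := rfl
@[simp] theorem exponent3_apply_two (i j k : ℕ) : exponent3 i j k 2 = k := rfl

theorem eq_exponent3_iff {d : Fin 3 →₀ ℕ} {i j k : ℕ} :
    d = exponent3 i j k ↔ d 0 = i ∧ d 1 = j ∧ d 2 = k := by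
  refine ⟨fun h => by simp [h], fun ⟨h0, h1, h2⟩ => ?_⟩
  ext l; fin_cases l <;> simpa

theorem weight_fin3 (w : Fin 3 → ℕ) (d : Fin 3 →₀ ℕ) :
    Finsupp.weight w d = d 0 * w 0 + d 1 * w 1 + d 2 * w 2 := by
  simp [Finsupp.weight_eq_sum, Fin.sum_univ_three]

theorem degW_eq_weightedTotalDegree (w1 w2 w3 : ℕ) (P : MvPolynomial (Fin 3) K) :
    degW w1 w2 w3 P = weightedTotalDegree ![w1, w2, w3] P :=
  Finset.sup_congr rfl fun d _ => by simp [weight_fin3, mul_comm]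

theorem lkey_le_iff {p q r p' q' r' : ℕ} :
    lkey p q r ≤ lkey p' q' r' ↔ p < p' ∨ (p = p' ∧ (q < q' ∨ (q = q' ∧ r ≤ r'))) := by
  simp [lkey, Prod.Lex.le_iff]

theorem lkey_lt_iff {p q r p' q' r' : ℕ} :
    lkey p q r < lkey p' q' r' ↔ p < p' ∨ (p = p' ∧ (q < q' ∨ (q = q' ∧ r < r'))) := by
  simp [lkey, Prod.Lex.lt_iff]

noncomputable def ldeg₂Order : MonomialOrder (Fin 3) where
  syn := ℕ ×ₗ (ℕ ×ₗ ℕ)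
  toSyn :=
    { toFun := fun d => lkey (d 1) (d 2) (d 0)
      invFun := fun t => exponent3 (ofLex (ofLex t).2).2 (ofLex t).1 (ofLex (ofLex t).2).1
      left_inv := fun d => (eq_exponent3_iff.mpr ⟨rfl, rfl, rfl⟩).symm
      right_inv := fun _ => rfl
      map_add' := fun _ _ => rfl }
  toSyn_monotone := fun d e h => by
    have := h 0; have := h 1; have := h 2
    change lkey _ _ _ ≤ lkey _ _ _
    rw [lkey_le_iff]; omega

theorem ldeg₂Order_le_iff {d e : Fin 3 →₀ ℕ} :
    d ≼[ldeg₂Order] e ↔ lkey (d 1) (d 2) (d 0) ≤ lkey (e 1) (e 2) (e 0) := Iff.rfl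

theorem ldeg₂Order_lt_iff {d e : Fin 3 →₀ ℕ} :
    d ≺[ldeg₂Order] e ↔ lkey (d 1) (d 2) (d 0) < lkey (e 1) (e 2) (e 0) := Iff.rfl

theorem hasLdeg2_iff {P : MvPolynomial (Fin 3) K} {i j k : ℕ} :
    HasLdeg2 P i j k ↔ P ≠ 0 ∧ ldeg₂Order.degree P = exponent3 i j k := by
  constructor
  · rintro ⟨⟨d, hd, hd'⟩, hle⟩
    obtain rfl := eq_exponent3_iff.mpr hd'
    refine ⟨by rintro rfl; simp at hd, ldeg₂Order.toSyn.injective (le_antisymm ?_ ?_)⟩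
    · exact ldeg₂Order.degree_le_iff.mpr hle
    · exact ldeg₂Order.le_degree hd
  · rintro ⟨hP, hdeg⟩
    refine ⟨⟨_, ldeg₂Order.degree_mem_support hP, eq_exponent3_iff.mp hdeg⟩, fun d hd => ?_⟩
    have := ldeg₂Order.le_degree hd
    rwa [hdeg] at this

theorem weightedTotalDegree_le_of_triangular {Xp p : MvPolynomial (Fin 3) K} {a : K} {b c : ℕ}
    (hb : 1 ≤ b) (hX : Xp = C a * X 0 + p) (hp : ∀ d ∈ p.support, d 0 = 0)
    (hl : HasLdeg2 Xp 0 b c) : weightedTotalDegree ![1, 1, 0] Xp ≤ b := by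
  refine Finset.sup_le fun d hd => ?_
  have hlex := lkey_le_iff.mp (hl.2 d hd)
  suffices d 0 + d 1 ≤ b by simpa [weight_fin3] using this
  rcases Finset.mem_union.mp (support_add (hX ▸ hd)) with h | h
  · rw [C_mul_X_eq_monomial] at h
    obtain rfl := Finset.mem_singleton.mp (support_monomial_subset h)
    simpa using hb
  · have := hp d h
    omega

theorem lkey_lt_of_lkey_le {m n b c d₀ d₁ d₂ : ℕ} (hb : 1 ≤ b) (h : 4 * d₀ + d₁ ≤ 4 * m)
    (hl : lkey d₁ d₂ d₀ ≤ lkey (4 * m) n 0) (hne : ¬(d₀ = 0 ∧ d₁ = 4 * m ∧ d₂ = n)) :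
    lkey (d₀ + d₁ * b) (d₁ * c + d₂) 0 < lkey (4 * b * m) (4 * c * m + n) 0 := by
  rw [lkey_le_iff] at hl
  rw [lkey_lt_iff]
  rcases Nat.eq_zero_or_pos d₀ with rfl | hd₀
  · rcases hl with hl | ⟨rfl, hl | ⟨rfl, hl⟩⟩
    · left; nlinarith
    · right; exact ⟨by ring, Or.inl (by nlinarith)⟩
    · omega
  · left; nlinarith [Nat.mul_le_mul_right b h]

theorem hasLdeg2_aeval {Yp Xp Zp P : MvPolynomial (Fin 3) K} {m n b c : ℕ} (hb : 1 ≤ b)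
    (hY : ldeg₂Order.degree Yp ≼[ldeg₂Order] exponent3 0 1 0)
    (hX : HasLdeg2 Xp 0 b c) (hZ₀ : Zp ≠ 0) (hZ : ldeg₂Order.degree Zp = exponent3 0 0 1)
    (hPsupp : ∀ d ∈ P.support, 4 * d 0 + d 1 ≤ 4 * m) (hP : HasLdeg2 P 0 (4 * m) n) :
    HasLdeg2 (aeval ![Yp, Xp, Zp] P) 0 (4 * b * m) (4 * c * m + n) := by
  obtain ⟨hX₀, hXdeg⟩ := hasLdeg2_iff.mp hX
  obtain ⟨hP₀, hPdeg⟩ := hasLdeg2_iff.mp hP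
  set D : Fin 3 → Fin 3 →₀ ℕ := ![exponent3 0 1 0, exponent3 0 b c, exponent3 0 0 1]
  have hsum (d : Fin 3 →₀ ℕ) : ∑ i, d i • D i = exponent3 0 (d 0 + d 1 * b) (d 1 * c + d 2) := by
    ext j; fin_cases j <;> simp [D, Fin.sum_univ_three]
  have hlead : ∑ i, exponent3 0 (4 * m) n i • ldeg₂Order.degree (![Yp, Xp, Zp] i) =
      exponent3 0 (4 * b * m) (4 * c * m + n) := by
    ext j; fin_cases j <;> simp [Fin.sum_univ_three, hXdeg, hZ, mul_comm, mul_left_comm]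
  have hD : ∀ i, ldeg₂Order.degree (![Yp, Xp, Zp] i) ≼[ldeg₂Order] D i := by
    intro i; fin_cases i
    exacts [hY, (congrArg ldeg₂Order.toSyn hXdeg).le, (congrArg ldeg₂Order.toSyn hZ).le]
  have hf : ∀ i, exponent3 0 (4 * m) n i ≠ 0 → ![Yp, Xp, Zp] i ≠ 0 := by
    intro i; fin_cases i
    exacts [fun h => absurd rfl h, fun _ => hX₀, fun _ => hZ₀]
  obtain ⟨hQ₀, hQdeg⟩ := ldeg₂Order.degree_aeval_eq_of_forall_lt hD
    (hPdeg ▸ ldeg₂Order.degree_mem_support hP₀) hf fun d hd hne => by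
      rw [hsum, hlead, ldeg₂Order_lt_iff]
      simp only [exponent3_apply_zero, exponent3_apply_one, exponent3_apply_two]
      exact lkey_lt_of_lkey_le hb (hPsupp d hd) (hP.2 d hd) (hne ∘ eq_exponent3_iff.mpr)
  exact hasLdeg2_iff.mpr ⟨hQ₀, hQdeg.trans hlead⟩

theorem mem_support_aeval_weight_le {f : Fin 3 → MvPolynomial (Fin 3) K} {w₀ w₁ w₂ v₀ v₁ v₂ : ℕ}
    (hv : ∀ i, weightedTotalDegree ![w₀, w₁, w₂] (f i) ≤ ![v₀, v₁, v₂] i)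
    {P : MvPolynomial (Fin 3) K} {B : ℕ} (hP : ∀ d ∈ P.support, d 0 * v₀ + d 1 * v₁ + d 2 * v₂ ≤ B)
    {e : Fin 3 →₀ ℕ} (he : e ∈ (aeval f P).support) : e 0 * w₀ + e 1 * w₁ + e 2 * w₂ ≤ B := by
  have hw := (le_weightedTotalDegree _ he).trans (weightedTotalDegree_aeval_le _ hv P)
  refine le_trans (by simp [weight_fin3]) (hw.trans (Finset.sup_le fun d hd => ?_))
  simpa [weight_fin3] using hP d hd

theorem triangular_case_general (m n b c : ℕ) (hb : 1 ≤ b)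
    (Xp Yp Zp : MvPolynomial (Fin 3) K)
    -- γ = (Xp, Yp, Zp) is triangular
    (htriX : ∃ (a : Kˣ) (p : MvPolynomial (Fin 3) K),
      Xp = C (a : K) * X 0 + p ∧ ∀ d ∈ p.support, d 0 = 0)
    (htriZ : ∃ (a : Kˣ) (r : K), Zp = C (a : K) * X 2 + C r)
    -- degree hypotheses on γ
    (hXl2 : HasLdeg2 Xp 0 b c)
    (hXdeg : degW 3 3 1 Xp = 3 * b + c)
    (hYdeg : degW 3 3 1 Yp = 3)
    -- P ∈ P*_{m,n}
    (P : MvPolynomial (Fin 3) K)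
    (hPsupp : ∀ d ∈ P.support,
      4 * d 0 + d 1 ≤ 4 * m ∧ 4 * d 0 + d 2 ≤ 4 * m + n ∧
      8 * d 0 + 2 * d 1 + d 2 ≤ 8 * m + n)
    (hPl2 : HasLdeg2 P 0 (4 * m) n) :
    -- conclusion : (P)πγ ∈ Q*_{4bm, 4cm+n}
    let Q : MvPolynomial (Fin 3) K := aeval ![Yp, Xp, Zp] P
    (∀ d ∈ Q.support,
        d 0 + d 1 ≤ 4 * b * m ∧
        3 * d 0 + 3 * d 1 + d 2 ≤ 3 * (4 * b * m) + (4 * c * m + n)) ∧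
    HasLdeg2 Q 0 (4 * b * m) (4 * c * m + n) := by
  intro Q
  obtain ⟨aX, pX, hX, hpX⟩ := htriX
  obtain ⟨aZ, rZ, hZ⟩ := htriZ
  rw [degW_eq_weightedTotalDegree] at hXdeg hYdeg
  have hY (e) (he : e ∈ Yp.support) : 3 * e 0 + 3 * e 1 + e 2 ≤ 3 := by
    have := le_weightedTotalDegree ![3, 3, 1] he
    rw [hYdeg] at this
    simpa [weight_fin3, mul_comm] using this
  have hv₁ : ∀ i, weightedTotalDegree ![1, 1, 0] (![Yp, Xp, Zp] i) ≤ ![1, b, 0] i := by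
    intro i; fin_cases i
    exacts [Finset.sup_le fun e he => by
        have := hY e he
        simpa [weight_fin3] using (show e 0 + e 1 ≤ 1 by omega),
      weightedTotalDegree_le_of_triangular hb hX hpX hXl2,
      hZ ▸ weightedTotalDegree_C_mul_X_add_C_le _ _ _ _]
  have hv₂ : ∀ i, weightedTotalDegree ![3, 3, 1] (![Yp, Xp, Zp] i) ≤ ![3, 3 * b + c, 1] i := by
    intro i; fin_cases i
    exacts [hYdeg.le, hXdeg.le, hZ ▸ weightedTotalDegree_C_mul_X_add_C_le _ _ _ _]
  have hZdeg : ldeg₂Order.degree Zp = exponent3 0 0 1 := by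
    rw [hZ, ldeg₂Order.degree_C_mul_X_add_C aZ.ne_zero, eq_exponent3_iff]; simp
  refine ⟨fun e he => ⟨?_, ?_⟩, hasLdeg2_aeval hb ?_ hXl2 ?_ hZdeg (fun d hd => (hPsupp d hd).1) hPl2⟩
  · simpa using mem_support_aeval_weight_le hv₁ (fun d hd => by nlinarith [hPsupp d hd]) he
  · simpa [mul_comm] using
      mem_support_aeval_weight_le hv₂ (fun d hd => by nlinarith [hPsupp d hd]) he
  · exact ldeg₂Order.degree_le_iff.mpr fun e he => by
      have := hY e he
      rw [ldeg₂Order_le_iff, lkey_le_iff]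
      simp only [exponent3_apply_zero, exponent3_apply_one, exponent3_apply_two]
      omega
  · exact ldeg₂Order.ne_zero_of_degree_ne_zero (by
      rw [hZdeg]; intro h; simpa using DFunLike.congr_fun h 2)

/-- The triangular-case lemma: if `γ = (Xp, Yp, Zp)` is a triangular automorphism
with `ldeg₂(Xp) = (0,b,c)`, `b ≥ 1`, `deg_{(3,3,1)}(Xp) = 3b+c` and
`deg_{(3,3,1)}(Yp) = 3`, then for every `P ∈ P*_{m,n}` the polynomial `(P)πγ`
lies in `Q*_{m',n'}` with `m' = 4bm` and `n' = 4cm + n`. -/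
theorem triangular_case (m n b c : ℕ) (hm : 1 ≤ m) (hb : 1 ≤ b)
    (Xp Yp Zp : MvPolynomial (Fin 3) K)
    -- γ = (Xp, Yp, Zp) is triangular
    (htriX : ∃ (a : Kˣ) (p : MvPolynomial (Fin 3) K),
      Xp = C (a : K) * X 0 + p ∧ ∀ d ∈ p.support, d 0 = 0)
    (htriY : ∃ (a : Kˣ) (q : MvPolynomial (Fin 3) K),
      Yp = C (a : K) * X 1 + q ∧ ∀ d ∈ q.support, d 0 = 0 ∧ d 1 = 0)
    (htriZ : ∃ (a : Kˣ) (r : K), Zp = C (a : K) * X 2 + C r)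
    -- degree hypotheses on γ
    (hXl2 : HasLdeg2 Xp 0 b c)
    (hXdeg : degW 3 3 1 Xp = 3 * b + c)
    (hYdeg : degW 3 3 1 Yp = 3)
    -- P ∈ P*_{m,n}
    (P : MvPolynomial (Fin 3) K)
    (hPsupp : ∀ d ∈ P.support,
      4 * d 0 + d 1 ≤ 4 * m ∧ 4 * d 0 + d 2 ≤ 4 * m + n ∧
      8 * d 0 + 2 * d 1 + d 2 ≤ 8 * m + n)
    (hPl2 : HasLdeg2 P 0 (4 * m) n)
    (hPl3 : HasLdeg3 P 0 (2 * m) (4 * m + n)) :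
    -- conclusion : (P)πγ ∈ Q*_{4bm, 4cm+n}
    let Q : MvPolynomial (Fin 3) K := aeval ![Yp, Xp, Zp] P
    (∀ d ∈ Q.support,
        d 0 + d 1 ≤ 4 * b * m ∧
        3 * d 0 + 3 * d 1 + d 2 ≤ 3 * (4 * b * m) + (4 * c * m + n)) ∧
    HasLdeg2 Q 0 (4 * b * m) (4 * c * m + n) :=
  triangular_case_general m n b c hb Xp Yp Zp htriX htriZ hXl2 hXdeg hYdeg P hPsupp hPl2
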